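/- arXiv:2404.17996 — 2 statements merged into one kernel-verified Lean document; each statement's English description precedes it below -/
import Mathlib

section
/- Let π be an unsigned permutation of size n. If the cycle graph G(π) contains an oriented cycle C = (o_1, …, o_m) that is an even cycle, then C contains a valid oriented triple (o_i, o_j, o_k), with positions i < j < k, such that k = j + 1. -/
/-- Position map of the transposition τ(a,b,c): a rotation of the interval [a, c). -/
def rotFun (a b c p : ℕ) : ℕ :=
  if a ≤ p ∧ p < a + (c - b) then p + (b - a)
  else if a + (c - b) ≤ p ∧ p < c then p - (c - b)
  else p

/-- The permutation of positions performed by the transposition τ(a,b,c). -/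
def rotEquiv (a b c : ℕ) : Equiv.Perm ℕ :=
  if h : a ≤ b ∧ b ≤ c then
    { toFun := rotFun a b c
      invFun := rotFun a (a + c - b) c
      left_inv := by
        intro p
        unfold rotFun
        split_ifs <;> omega
      right_inv := by
        intro p
        unfold rotFun
        split_ifs <;> omega }
  else Equiv.refl ℕ

/-- `π` is (the extended version of) an unsigned permutation of size `n`:
a bijection of the positions `{0, …, n+1}` onto the values `{0, …, n+1}` fixing
`0` and `n+1` (encoded as a permutation of `ℕ` that is the identity beyond `n+1`). -/
def IsExtPerm (n : ℕ) (π : Equiv.Perm ℕ) : Prop :=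
  π 0 = 0 ∧ π (n + 1) = n + 1 ∧ ∀ x : ℕ, n + 1 < x → π x = x

/-- The permutation obtained from `π` by applying the transposition τ(a,b,c),
which exchanges the adjacent segments (π_a … π_{b-1}) and (π_b … π_{c-1}). -/
def applyTransp (π : Equiv.Perm ℕ) (a b c : ℕ) : Equiv.Perm ℕ :=
  (rotEquiv a b c).trans π

/-- Successor along an alternating cycle of the cycle graph `G(π)`: from the source
edge `e_i = (−π_i, +π_{i−1})` we traverse the target edge incident to `+π_{i−1}`,
namely `e'_{π_{i−1}+1} = (−(π_{i−1}+1), +π_{i−1})`, and arrive at the source edge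
whose right endpoint is `−(π_{i−1}+1)`, i.e. the one with index `π⁻¹(π_{i−1}+1)`. -/
def cgNext (π : Equiv.Perm ℕ) (i : ℕ) : ℕ :=
  π.symm (π (i - 1) + 1)

/-- The orbit of source-edge index `i` under `f` within `{1, …, n+1}`:
the set of source edges of the alternating cycle of `G(π)` through `e_i`. -/
def orbitOf (f : ℕ → ℕ) (n i : ℕ) : Finset ℕ :=
  (Finset.range (n + 2)).image (fun k => f^[k] i) ∩ Finset.Icc 1 (n + 1)

/-- The number of odd orbits of `f` on `{1, …, n+1}` (each orbit counted at its
minimal representative). -/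
def coddAux (f : ℕ → ℕ) (n : ℕ) : ℕ :=
  ((Finset.Icc 1 (n + 1)).filter
    (fun i => (∀ j ∈ orbitOf f n i, i ≤ j) ∧ (orbitOf f n i).card % 2 = 1)).card

/-- `c_odd(π)`: the number of odd alternating cycles of the cycle graph `G(π)`. -/
def codd (n : ℕ) (π : Equiv.Perm ℕ) : ℕ := coddAux (cgNext π) n

/-- The transposition τ(a,b,c) (with `1 ≤ a < b < c ≤ n+1`) is a 2-transposition for `π`:
it increases the number of odd cycles of the cycle graph by two. -/
def IsTwoTransposition (n : ℕ) (π : Equiv.Perm ℕ) (a b c : ℕ) : Prop :=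
  1 ≤ a ∧ a < b ∧ b < c ∧ c ≤ n + 1 ∧
  codd n (applyTransp π a b c) = codd n π + 2

/-- `(x, y, z)` (the indices of three source edges, read in cycle order) is a valid
oriented triple: it is an oriented triple, and the transposition acting on these three
source edges (i.e. on their indices sorted increasingly) is a 2-transposition. -/
def ValidOrientedTriple (n : ℕ) (π : Equiv.Perm ℕ) (x y z : ℕ) : Prop :=
  (x > z ∧ z > y ∧ IsTwoTransposition n π y z x) ∨
  (y > x ∧ x > z ∧ IsTwoTransposition n π z x y) ∨
  (z > y ∧ y > x ∧ IsTwoTransposition n π x y z)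

/-- The transposition acting on the three (distinct) source edges `x, y, z`
is a 2-transposition for `π`. -/
def IsTwoTranspositionOn (n : ℕ) (π : Equiv.Perm ℕ) (x y z : ℕ) : Prop :=
  ∃ a b c : ℕ, a < b ∧ b < c ∧ ({a, b, c} : Set ℕ) = {x, y, z} ∧
    IsTwoTransposition n π a b c

/-- `o 1, …, o m` is (the listing of the source-edge indices of) an `m`-cycle of the
cycle graph `G(π)`: the listing follows the traversal of the cycle starting from its
rightmost vertex along the incident source edge, so consecutive listed edges satisfy
`cgNext` and the first listed index is the largest one. -/
def IsCycleOf (n : ℕ) (π : Equiv.Perm ℕ) (m : ℕ) (o : ℕ → ℕ) : Prop :=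
  0 < m ∧
  (∀ t : ℕ, 1 ≤ t → t ≤ m → 1 ≤ o t ∧ o t ≤ n + 1) ∧
  (∀ s t : ℕ, 1 ≤ s → s ≤ m → 1 ≤ t → t ≤ m → o s = o t → s = t) ∧
  (∀ t : ℕ, 1 ≤ t → t ≤ m → cgNext π (o t) = o (t % m + 1)) ∧
  (∀ t : ℕ, 2 ≤ t → t ≤ m → o t < o 1)

/-- The cycle `C = (o 1, …, o m)` is oriented: its listing is not strictly decreasing. -/
def OrientedCycle (m : ℕ) (o : ℕ → ℕ) : Prop :=
  ¬ (∀ t : ℕ, 1 ≤ t → t + 1 ≤ m → o (t + 1) < o t)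

/-!
Pick an ascent `o t < o (t + 1)` of the oriented cycle. Since `o 1` is the largest entry,
`t ≥ 2` and `o t < o (t + 1) < o 1`, so `(o 1, o t, o (t + 1))` is an oriented triple.
Up to relabelling positions by the rotation `rotEquiv`, the transposition
`τ(o t, o (t + 1), o 1)` turns the successor map `cgNext π` into `cgNext π` precomposed with
the 3-cycle `o t ↦ o 1 ↦ o (t + 1) ↦ o t`. This cuts `C` into the cycles `(o (t + 1))`,
`(o 2, …, o t)` and `(o (t + 2), …, o m, o 1)` of lengths `1`, `t - 1`, `m - t`, and leaves
every other cycle alone. As `m` is even, exactly one of `t - 1` and `m - t` is odd, so the even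
cycle `C` is replaced by two odd cycles.
-/

section

open Finset Function

variable {f g h o : ℕ → ℕ} {n i j a b c x y u s p m t : ℕ} {π : Equiv.Perm ℕ}

theorem exists_isPeriodicPt_of_bijOn
    (hf : Set.BijOn f (Set.Icc 1 (n + 1)) (Set.Icc 1 (n + 1))) (hi : i ∈ Set.Icc 1 (n + 1)) :
    ∃ p, 0 < p ∧ p ≤ n + 1 ∧ IsPeriodicPt f p i := by
  set F := hf.mapsTo.restrict f _ _
  have hF : Injective F := hf.mapsTo.restrict_inj.2 hf.injOn
  refine ⟨minimalPeriod F ⟨i, hi⟩,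
    minimalPeriod_pos_of_mem_periodicPts (hF.mem_periodicPts _),
    by simpa using minimalPeriod_le_card (f := F) (x := ⟨i, hi⟩), ?_⟩
  have := congrArg Subtype.val (iterate_minimalPeriod (f := F) (x := ⟨i, hi⟩))
  rwa [hf.mapsTo.iterate_restrict, Set.MapsTo.val_restrict_apply] at this

theorem orbitOf_subset : orbitOf f n i ⊆ Icc 1 (n + 1) := inter_subset_right

theorem mem_orbitOf_iff (hf : Set.BijOn f (Set.Icc 1 (n + 1)) (Set.Icc 1 (n + 1)))
    (hi : i ∈ Set.Icc 1 (n + 1)) : j ∈ orbitOf f n i ↔ ∃ k, f^[k] i = j := by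
  obtain ⟨p, hp, hpn, hper⟩ := exists_isPeriodicPt_of_bijOn hf hi
  simp only [orbitOf, mem_inter, mem_image, mem_range]
  constructor
  · rintro ⟨⟨k, -, rfl⟩, -⟩
    exact ⟨k, rfl⟩
  · rintro ⟨k, rfl⟩
    exact ⟨⟨k % p, by have := Nat.mod_lt k hp; omega, hper.iterate_mod_apply k⟩,
      mem_Icc.2 (hf.mapsTo.iterate k hi)⟩

theorem mem_orbitOf_self (hf : Set.BijOn f (Set.Icc 1 (n + 1)) (Set.Icc 1 (n + 1)))
    (hi : i ∈ Set.Icc 1 (n + 1)) : i ∈ orbitOf f n i :=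
  (mem_orbitOf_iff hf hi).2 ⟨0, rfl⟩

theorem orbitOf_eq_of_mem (hf : Set.BijOn f (Set.Icc 1 (n + 1)) (Set.Icc 1 (n + 1)))
    (hi : i ∈ Set.Icc 1 (n + 1)) (hj : j ∈ orbitOf f n i) : orbitOf f n j = orbitOf f n i := by
  have hj' : j ∈ Set.Icc 1 (n + 1) := mem_Icc.1 (orbitOf_subset hj)
  obtain ⟨s, rfl⟩ := (mem_orbitOf_iff hf hi).1 hj
  obtain ⟨p, hp, -, hper⟩ := exists_isPeriodicPt_of_bijOn hf hi
  ext y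
  rw [mem_orbitOf_iff hf hj', mem_orbitOf_iff hf hi]
  constructor
  · rintro ⟨k, rfl⟩
    exact ⟨k + s, iterate_add_apply f k s i⟩
  · rintro ⟨k, rfl⟩
    -- `i` has period `p * s`, so `k` steps from `i` are `k + (p - 1) * s` steps from `f^[s] i`
    refine ⟨k + (p - 1) * s, ?_⟩
    have hps : (p - 1) * s + s = p * s := by
      rw [← Nat.succ_mul, Nat.succ_eq_add_one, Nat.sub_add_cancel hp]
    rw [iterate_add_apply, ← iterate_add_apply f _ s, hps, (hper.mul_const s).eq]

theorem orbitOf_eq_image_range (hf : Set.BijOn f (Set.Icc 1 (n + 1)) (Set.Icc 1 (n + 1)))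
    {q : ℕ → ℕ} (hp : 0 < p) (hq0 : q 0 ∈ Set.Icc 1 (n + 1))
    (hq : ∀ k, k + 1 < p → f (q k) = q (k + 1)) (hqp : f (q (p - 1)) = q 0) :
    orbitOf f n (q 0) = (range p).image q := by
  have hiter : ∀ k, f^[k] (q 0) = q (k % p) := by
    intro k
    induction k with
    | zero => simp
    | succ k ih =>
      rw [iterate_succ_apply', ih, ← Nat.mod_add_mod]
      rcases (Nat.succ_le_of_lt (Nat.mod_lt k hp)).lt_or_eq with hlt | heq
      · rw [hq _ hlt, Nat.mod_eq_of_lt hlt]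
      · rw [show k % p = p - 1 by omega, hqp, Nat.sub_add_cancel hp, Nat.mod_self]
  ext y
  simp only [mem_orbitOf_iff hf hq0, hiter, mem_image, mem_range]
  constructor
  · rintro ⟨k, rfl⟩
    exact ⟨k % p, Nat.mod_lt k hp, rfl⟩
  · rintro ⟨k, hk, rfl⟩
    exact ⟨k, by rw [Nat.mod_eq_of_lt hk]⟩

theorem coddAux_eq_card_odd_orbits
    (hf : Set.BijOn f (Set.Icc 1 (n + 1)) (Set.Icc 1 (n + 1))) :
    coddAux f n = #{O ∈ (Icc 1 (n + 1)).image (orbitOf f n) | O.card % 2 = 1} := by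
  refine card_nbij (orbitOf f n) ?_ ?_ ?_
  · intro i hi
    rw [mem_coe, mem_filter] at hi ⊢
    exact ⟨mem_image_of_mem _ hi.1, hi.2.2⟩
  · intro i hi j hj hij
    rw [mem_coe, mem_filter] at hi hj
    have hij' : i ∈ orbitOf f n j := hij ▸ mem_orbitOf_self hf (mem_Icc.1 hi.1)
    have hji' : j ∈ orbitOf f n i := hij.symm ▸ mem_orbitOf_self hf (mem_Icc.1 hj.1)
    exact le_antisymm (hi.2.1 j hji') (hj.2.1 i hij')
  · intro O hO
    rw [mem_coe, mem_filter, mem_image] at hO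
    obtain ⟨⟨j, hj, rfl⟩, hodd⟩ := hO
    have hne : (orbitOf f n j).Nonempty := ⟨j, mem_orbitOf_self hf (mem_Icc.1 hj)⟩
    have hmin_mem := (orbitOf f n j).min'_mem hne
    have hmin := orbitOf_eq_of_mem hf (mem_Icc.1 hj) hmin_mem
    refine ⟨_, ?_, hmin⟩
    rw [mem_coe, mem_filter, hmin]
    exact ⟨orbitOf_subset hmin_mem, fun k hk => min'_le _ _ hk, hodd⟩

theorem orbitOf_eq_map_of_semiconj {e : Equiv.Perm ℕ}
    (he : ∀ x, e x ∈ Icc 1 (n + 1) ↔ x ∈ Icc 1 (n + 1)) (hgh : Semiconj e g h) (i : ℕ) :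
    orbitOf g n i = (orbitOf h n (e i)).map e.symm.toEmbedding := by
  have hit : ∀ k, h^[k] (e i) = e (g^[k] i) := fun k => ((hgh.iterate_right k).eq i).symm
  ext y
  simp only [mem_map_equiv, Equiv.symm_symm, orbitOf, mem_inter, mem_image, hit,
    e.apply_eq_iff_eq, he]

theorem coddAux_eq_of_semiconj {e : Equiv.Perm ℕ}
    (he : ∀ x, e x ∈ Icc 1 (n + 1) ↔ x ∈ Icc 1 (n + 1))
    (hh : Set.BijOn h (Set.Icc 1 (n + 1)) (Set.Icc 1 (n + 1))) (hgh : Semiconj e g h) :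
    coddAux g n = coddAux h n := by
  have heS : Set.BijOn e (Set.Icc 1 (n + 1)) (Set.Icc 1 (n + 1)) :=
    e.bijOn fun x => by simpa only [mem_Icc, Set.mem_Icc] using he x
  have hg : Set.BijOn g (Set.Icc 1 (n + 1)) (Set.Icc 1 (n + 1)) := by
    rw [show g = e.symm ∘ h ∘ e from funext fun x => e.eq_symm_apply.2 (hgh x)]
    exact heS.equiv_symm.comp (hh.comp heS)
  have horbits : (Icc 1 (n + 1)).image (orbitOf g n) =
      ((Icc 1 (n + 1)).image (orbitOf h n)).image (·.map e.symm.toEmbedding) := by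
    ext O
    simp only [mem_image, exists_exists_and_eq_and, orbitOf_eq_map_of_semiconj he hgh]
    constructor
    · rintro ⟨i, hi, rfl⟩
      exact ⟨e i, (he i).2 hi, rfl⟩
    · rintro ⟨j, hj, rfl⟩
      exact ⟨e.symm j, (he _).1 (by rwa [e.apply_symm_apply]), by rw [e.apply_symm_apply]⟩
  rw [coddAux_eq_card_odd_orbits hg, coddAux_eq_card_odd_orbits hh, horbits, filter_image,
    card_image_of_injective _ (map_injective _)]
  simp only [card_map]

theorem mem_orbitOf_of_mem_of_mem (hf : Set.BijOn f (Set.Icc 1 (n + 1)) (Set.Icc 1 (n + 1)))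
    (hi : i ∈ Set.Icc 1 (n + 1)) (hj : j ∈ Set.Icc 1 (n + 1)) (hyi : y ∈ orbitOf f n i)
    (hyj : y ∈ orbitOf f n j) : i ∈ orbitOf f n j := by
  rw [← orbitOf_eq_of_mem hf hj hyj, orbitOf_eq_of_mem hf hi hyi]
  exact mem_orbitOf_self hf hi

theorem orbitOf_eq_of_eqOn (hf : Set.BijOn f (Set.Icc 1 (n + 1)) (Set.Icc 1 (n + 1)))
    (hi : i ∈ Set.Icc 1 (n + 1)) (hfg : ∀ x ∈ orbitOf f n i, g x = f x) :
    orbitOf g n i = orbitOf f n i := by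
  have hit : ∀ k, g^[k] i = f^[k] i := by
    intro k
    induction k with
    | zero => rfl
    | succ k ih =>
      rw [iterate_succ_apply', iterate_succ_apply', ih,
        hfg _ ((mem_orbitOf_iff hf hi).2 ⟨k, rfl⟩)]
  simp only [orbitOf, hit]

theorem coddAux_eq_add_of_eqOn_compl
    (hf : Set.BijOn f (Set.Icc 1 (n + 1)) (Set.Icc 1 (n + 1)))
    (hg : Set.BijOn g (Set.Icc 1 (n + 1)) (Set.Icc 1 (n + 1))) (hc : c ∈ Set.Icc 1 (n + 1))
    (heven : (orbitOf f n c).card % 2 = 0)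
    (hfg : ∀ x ∈ Icc 1 (n + 1), x ∉ orbitOf f n c → g x = f x) :
    coddAux g n = coddAux f n + #{O ∈ (orbitOf f n c).image (orbitOf g n) | O.card % 2 = 1} := by
  set C := orbitOf f n c
  set R := (Icc 1 (n + 1) \ C).image (orbitOf f n)
  have hxS : ∀ {x}, x ∈ Icc 1 (n + 1) → x ∈ Set.Icc 1 (n + 1) := mem_Icc.1
  have horbit_out : ∀ x ∈ Icc 1 (n + 1), x ∉ C → ∀ y ∈ orbitOf f n x, y ∉ C :=
    fun x hx hxC y hy hyC => hxC (mem_orbitOf_of_mem_of_mem hf (hxS hx) hc hy hyC)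
  have hgf_out : ∀ x ∈ Icc 1 (n + 1), x ∉ C → orbitOf g n x = orbitOf f n x :=
    fun x hx hxC => orbitOf_eq_of_eqOn hf (hxS hx)
      fun y hy => hfg y (orbitOf_subset hy) (horbit_out x hx hxC y hy)
  have hf_orbits : (Icc 1 (n + 1)).image (orbitOf f n) = insert C R := by
    ext O
    simp only [R, mem_insert, mem_image, mem_sdiff]
    constructor
    · rintro ⟨x, hx, rfl⟩
      by_cases hxC : x ∈ C
      · exact Or.inl (orbitOf_eq_of_mem hf hc hxC)
      · exact Or.inr ⟨x, ⟨hx, hxC⟩, rfl⟩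
    · rintro (rfl | ⟨x, ⟨hx, -⟩, rfl⟩)
      exacts [⟨c, mem_Icc.2 hc, rfl⟩, ⟨x, hx, rfl⟩]
  have hg_orbits : (Icc 1 (n + 1)).image (orbitOf g n) = R ∪ C.image (orbitOf g n) := by
    ext O
    simp only [R, mem_union, mem_image, mem_sdiff]
    constructor
    · rintro ⟨x, hx, rfl⟩
      by_cases hxC : x ∈ C
      · exact Or.inr ⟨x, hxC, rfl⟩
      · exact Or.inl ⟨x, ⟨hx, hxC⟩, (hgf_out x hx hxC).symm⟩
    · rintro (⟨x, ⟨hx, hxC⟩, rfl⟩ | ⟨y, hy, rfl⟩)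
      exacts [⟨x, hx, hgf_out x hx hxC⟩, ⟨y, orbitOf_subset hy, rfl⟩]
  have hR_disj : Disjoint R (C.image (orbitOf g n)) := by
    simp only [R, disjoint_left, mem_image, mem_sdiff, not_exists, not_and]
    rintro _ ⟨x, ⟨hx, hxC⟩, rfl⟩ y hyC hyx
    refine horbit_out x hx hxC y ?_ hyC
    rw [← hyx]
    exact mem_orbitOf_self hg (hxS (orbitOf_subset hyC))
  have hC_notMem : C ∉ R := by
    simp only [R, mem_image, mem_sdiff, not_exists, not_and]
    rintro x ⟨hx, hxC⟩ hxc
    exact hxC (hxc ▸ mem_orbitOf_self hf (hxS hx))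
  rw [coddAux_eq_card_odd_orbits hg, coddAux_eq_card_odd_orbits hf, hf_orbits, hg_orbits,
    filter_union, card_union_of_disjoint (disjoint_filter_filter hR_disj), filter_insert,
    if_neg (by omega)]

def triCyc (a b c : ℕ) : Equiv.Perm ℕ := Equiv.swap a b * Equiv.swap a c

theorem triCyc_apply_left (hac : a ≠ c) (hbc : b ≠ c) : triCyc a b c a = c := by
  simp [triCyc, Equiv.swap_apply_of_ne_of_ne hac.symm hbc.symm]

theorem triCyc_apply_middle (hab : a ≠ b) (hbc : b ≠ c) : triCyc a b c b = a := by
  simp [triCyc, Equiv.swap_apply_of_ne_of_ne hab.symm hbc]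

theorem triCyc_apply_right : triCyc a b c c = b := by
  simp [triCyc]

theorem triCyc_apply_of_ne (ha : x ≠ a) (hb : x ≠ b) (hc : x ≠ c) : triCyc a b c x = x := by
  simp [triCyc, Equiv.swap_apply_of_ne_of_ne, *]

theorem triCyc_mem_Icc_iff (ha : a ∈ Set.Icc 1 (n + 1)) (hb : b ∈ Set.Icc 1 (n + 1))
    (hc : c ∈ Set.Icc 1 (n + 1)) : triCyc a b c x ∈ Set.Icc 1 (n + 1) ↔ x ∈ Set.Icc 1 (n + 1) := by
  simp only [Set.mem_Icc] at *
  simp only [triCyc, Equiv.Perm.mul_apply, Equiv.swap_apply_def]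
  split_ifs <;> omega

theorem rotEquiv_apply (hab : a ≤ b) (hbc : b ≤ c) : rotEquiv a b c x = rotFun a b c x := by
  rw [rotEquiv, dif_pos ⟨hab, hbc⟩]
  rfl

theorem rotFun_mem_Icc_iff (ha : 1 ≤ a) (hab : a ≤ b) (hbc : b ≤ c) (hc : c ≤ n + 1) :
    rotFun a b c x ∈ Icc 1 (n + 1) ↔ x ∈ Icc 1 (n + 1) := by
  simp only [mem_Icc, rotFun]
  split_ifs <;> omega

theorem rotFun_sub_one (ha : 1 ≤ a) (hab : a < b) (hbc : b < c) :
    rotFun a b c (x - 1) = triCyc a b c (rotFun a b c x) - 1 := by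
  simp only [rotFun, triCyc, Equiv.Perm.mul_apply, Equiv.swap_apply_def]
  split_ifs <;> omega

theorem semiconj_cgNext_applyTransp (ha : 1 ≤ a) (hab : a < b) (hbc : b < c) :
    Semiconj (rotEquiv a b c) (cgNext (applyTransp π a b c)) (cgNext π ∘ triCyc a b c) := by
  intro x
  simp only [cgNext, applyTransp, comp_apply, Equiv.trans_apply, Equiv.symm_trans_apply,
    Equiv.apply_symm_apply]
  rw [rotEquiv_apply hab.le hbc.le, rotEquiv_apply hab.le hbc.le, rotFun_sub_one ha hab hbc]

theorem IsExtPerm.symm (hπ : IsExtPerm n π) : IsExtPerm n π.symm :=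
  ⟨π.symm_apply_eq.2 hπ.1.symm, π.symm_apply_eq.2 hπ.2.1.symm,
    fun x hx => π.symm_apply_eq.2 (hπ.2.2 x hx).symm⟩

theorem IsExtPerm.apply_pos (hπ : IsExtPerm n π) (hx : 0 < x) : 0 < π x := by
  refine Nat.pos_of_ne_zero fun h => ?_
  have := π.injective (h.trans hπ.1.symm)
  omega

theorem IsExtPerm.apply_le_succ (hπ : IsExtPerm n π) (hx : x ≤ n + 1) : π x ≤ n + 1 := by
  by_contra h
  have := π.injective (hπ.2.2 (π x) (by omega))
  omega

theorem IsExtPerm.apply_le (hπ : IsExtPerm n π) (hx : x ≤ n) : π x ≤ n := by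
  have hne : π x ≠ n + 1 := fun h => by
    have := π.injective (h.trans hπ.2.1.symm)
    omega
  have := hπ.apply_le_succ (x := x) (by omega)
  omega

theorem IsExtPerm.cgNext_bijOn (hπ : IsExtPerm n π) :
    Set.BijOn (cgNext π) (Set.Icc 1 (n + 1)) (Set.Icc 1 (n + 1)) := by
  have hmaps : Set.MapsTo (cgNext π) (Set.Icc 1 (n + 1)) (Set.Icc 1 (n + 1)) := by
    rintro i ⟨hi1, hin⟩
    have := hπ.apply_le (x := i - 1) (by omega)
    exact ⟨hπ.symm.apply_pos (by omega), hπ.symm.apply_le_succ (by omega)⟩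
  refine (Set.finite_Icc 1 (n + 1)).injOn_iff_bijOn_of_mapsTo hmaps |>.1 ?_
  rintro i ⟨hi1, -⟩ j ⟨hj1, -⟩ hij
  have := π.injective (Nat.succ_injective (π.symm.injective hij))
  omega

theorem codd_applyTransp_eq_coddAux (hπ : IsExtPerm n π) (ha : 1 ≤ a) (hab : a < b)
    (hbc : b < c) (hc : c ≤ n + 1) :
    codd n (applyTransp π a b c) = coddAux (cgNext π ∘ triCyc a b c) n := by
  refine coddAux_eq_of_semiconj (fun x => ?_) ?_ (semiconj_cgNext_applyTransp ha hab hbc)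
  · rw [rotEquiv_apply hab.le hbc.le]
    exact rotFun_mem_Icc_iff ha hab.le hbc.le hc
  · exact hπ.cgNext_bijOn.comp ((triCyc a b c).bijOn fun x =>
      triCyc_mem_Icc_iff ⟨ha, by omega⟩ ⟨by omega, by omega⟩ ⟨by omega, hc⟩)

noncomputable def splitCycle (f : ℕ → ℕ) (y u : ℕ) : ℕ → ℕ :=
  f ∘ triCyc (f^[minimalPeriod f y - 1] y) y (f^[u] y)

theorem iterate_ne_iterate_of_lt_minimalPeriod (hi : i < minimalPeriod f y)
    (hj : j < minimalPeriod f y) (hij : i ≠ j) : f^[i] y ≠ f^[j] y :=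
  (iterate_eq_iterate_iff_of_lt_minimalPeriod hi hj).not.2 hij

theorem iterate_ne_self_of_lt_minimalPeriod (hi : 0 < i) (him : i < minimalPeriod f y) :
    f^[i] y ≠ y :=
  iterate_ne_iterate_of_lt_minimalPeriod (j := 0) him (by omega) hi.ne'

theorem card_image_range_iterate (hsp : s + p ≤ minimalPeriod f y) :
    #((range p).image (f^[s + ·] y)) = p := by
  rw [card_image_of_injOn, card_range]
  intro i hi j hj hij
  simp only [coe_range, Set.mem_Iio] at hi hj
  have := (iterate_eq_iterate_iff_of_lt_minimalPeriod (by omega) (by omega)).1 hij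
  omega

theorem orbitOf_eq_image_range_minimalPeriod
    (hf : Set.BijOn f (Set.Icc 1 (n + 1)) (Set.Icc 1 (n + 1))) (hy : y ∈ Set.Icc 1 (n + 1)) :
    orbitOf f n y = (range (minimalPeriod f y)).image (f^[·] y) := by
  obtain ⟨p, hp, -, hper⟩ := exists_isPeriodicPt_of_bijOn hf hy
  have hpos := hper.minimalPeriod_pos hp
  refine orbitOf_eq_image_range hf (q := (f^[·] y)) hpos hy
    (fun k _ => (iterate_succ_apply' f k y).symm) ?_
  show f (f^[minimalPeriod f y - 1] y) = y
  rw [← iterate_succ_apply' f, Nat.succ_eq_add_one, Nat.sub_add_cancel hpos,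
    iterate_minimalPeriod]

theorem splitCycle_apply_self (hu : 0 < u) (hum : u + 1 < minimalPeriod f y) :
    splitCycle f y u y = y := by
  rw [splitCycle, comp_apply,
    triCyc_apply_middle (iterate_ne_self_of_lt_minimalPeriod (by omega) (by omega))
      (iterate_ne_self_of_lt_minimalPeriod hu (by omega)).symm,
    ← iterate_succ_apply' f, Nat.succ_eq_add_one, Nat.sub_add_cancel (by omega),
    iterate_minimalPeriod]

theorem splitCycle_apply_iterate_self : splitCycle f y u (f^[u] y) = f y := by
  rw [splitCycle, comp_apply, triCyc_apply_right]

theorem splitCycle_apply_pred (hu : 0 < u) (hum : u + 1 < minimalPeriod f y) :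
    splitCycle f y u (f^[minimalPeriod f y - 1] y) = f^[u + 1] y := by
  rw [splitCycle, comp_apply,
    triCyc_apply_left (iterate_ne_iterate_of_lt_minimalPeriod (by omega) (by omega) (by omega))
      (iterate_ne_self_of_lt_minimalPeriod hu (by omega)).symm,
    iterate_succ_apply']

theorem splitCycle_apply_iterate (hj : 0 < j) (hjm : j + 1 < minimalPeriod f y) (hju : j ≠ u)
    (hum : u + 1 < minimalPeriod f y) : splitCycle f y u (f^[j] y) = f^[j + 1] y := by
  rw [splitCycle, comp_apply,
    triCyc_apply_of_ne (iterate_ne_iterate_of_lt_minimalPeriod (by omega) (by omega) (by omega))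
      (iterate_ne_self_of_lt_minimalPeriod hj (by omega))
      (iterate_ne_iterate_of_lt_minimalPeriod (by omega) (by omega) hju),
    iterate_succ_apply']

theorem bijOn_splitCycle (hf : Set.BijOn f (Set.Icc 1 (n + 1)) (Set.Icc 1 (n + 1)))
    (hy : y ∈ Set.Icc 1 (n + 1)) :
    Set.BijOn (splitCycle f y u) (Set.Icc 1 (n + 1)) (Set.Icc 1 (n + 1)) := by
  exact hf.comp (Equiv.bijOn _ fun x =>
    triCyc_mem_Icc_iff (hf.mapsTo.iterate _ hy) hy (hf.mapsTo.iterate u hy))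

theorem orbitOf_splitCycle_self (hf : Set.BijOn f (Set.Icc 1 (n + 1)) (Set.Icc 1 (n + 1)))
    (hy : y ∈ Set.Icc 1 (n + 1)) (hu : 0 < u) (hum : u + 1 < minimalPeriod f y) :
    orbitOf (splitCycle f y u) n y = {y} := by
  ext z
  simp only [mem_orbitOf_iff (bijOn_splitCycle hf hy) hy,
    iterate_fixed (splitCycle_apply_self hu hum), exists_const, mem_singleton, eq_comm]

theorem orbitOf_splitCycle_apply (hf : Set.BijOn f (Set.Icc 1 (n + 1)) (Set.Icc 1 (n + 1)))
    (hy : y ∈ Set.Icc 1 (n + 1)) (hu : 0 < u) (hum : u + 1 < minimalPeriod f y) :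
    orbitOf (splitCycle f y u) n (f y) = (range u).image (f^[1 + ·] y) := by
  refine orbitOf_eq_image_range (bijOn_splitCycle hf hy) (q := (f^[1 + ·] y)) hu (hf.mapsTo hy)
    (fun k hk => splitCycle_apply_iterate (by omega) (by omega) (by omega) hum) ?_
  show splitCycle f y u (f^[1 + (u - 1)] y) = f y
  rw [Nat.add_sub_cancel' hu, splitCycle_apply_iterate_self]

theorem orbitOf_splitCycle_iterate (hf : Set.BijOn f (Set.Icc 1 (n + 1)) (Set.Icc 1 (n + 1)))
    (hy : y ∈ Set.Icc 1 (n + 1)) (hu : 0 < u) (hum : u + 1 < minimalPeriod f y) :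
    orbitOf (splitCycle f y u) n (f^[u + 1] y) =
      (range (minimalPeriod f y - u - 1)).image (f^[u + 1 + ·] y) := by
  refine orbitOf_eq_image_range (bijOn_splitCycle hf hy) (q := (f^[u + 1 + ·] y)) (by omega)
    (hf.mapsTo.iterate _ hy)
    (fun k hk => splitCycle_apply_iterate (by omega) (by omega) (by omega) hum) ?_
  show splitCycle f y u (f^[u + 1 + (minimalPeriod f y - u - 1 - 1)] y) = f^[u + 1] y
  rw [show u + 1 + (minimalPeriod f y - u - 1 - 1) = minimalPeriod f y - 1 by omega,
    splitCycle_apply_pred hu hum]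

theorem image_orbitOf_splitCycle (hf : Set.BijOn f (Set.Icc 1 (n + 1)) (Set.Icc 1 (n + 1)))
    (hy : y ∈ Set.Icc 1 (n + 1)) (hu : 0 < u) (hum : u + 1 < minimalPeriod f y) :
    (orbitOf f n y).image (orbitOf (splitCycle f y u) n) =
      {{y}, (range u).image (f^[1 + ·] y),
        (range (minimalPeriod f y - u - 1)).image (f^[u + 1 + ·] y)} := by
  have hg := bijOn_splitCycle (u := u) hf hy
  have horbit_eq : ∀ {x j}, x ∈ Set.Icc 1 (n + 1) →
      f^[j] y ∈ orbitOf (splitCycle f y u) n x →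
      orbitOf (splitCycle f y u) n (f^[j] y) = orbitOf (splitCycle f y u) n x :=
    fun hx hj => orbitOf_eq_of_mem hg hx hj
  rw [orbitOf_eq_image_range_minimalPeriod hf hy, image_image]
  ext O
  simp only [mem_image, mem_range, mem_insert, mem_singleton, comp_apply]
  constructor
  · rintro ⟨j, hj, rfl⟩
    rcases Nat.eq_zero_or_pos j with rfl | hj0
    · exact Or.inl (orbitOf_splitCycle_self hf hy hu hum)
    by_cases hju : j ≤ u
    · refine Or.inr (Or.inl ?_)
      rw [← orbitOf_splitCycle_apply hf hy hu hum]
      refine horbit_eq (hf.mapsTo hy) ?_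
      rw [orbitOf_splitCycle_apply hf hy hu hum]
      exact mem_image.2 ⟨j - 1, mem_range.2 (by omega), by rw [Nat.add_sub_cancel' hj0]⟩
    · refine Or.inr (Or.inr ?_)
      rw [← orbitOf_splitCycle_iterate hf hy hu hum]
      refine horbit_eq (hf.mapsTo.iterate _ hy) ?_
      rw [orbitOf_splitCycle_iterate hf hy hu hum]
      exact mem_image.2
        ⟨j - (u + 1), mem_range.2 (by omega), by rw [Nat.add_sub_cancel' (by omega)]⟩
  · rintro (rfl | rfl | rfl)
    · exact ⟨0, by omega, orbitOf_splitCycle_self hf hy hu hum⟩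
    · exact ⟨1, by omega, orbitOf_splitCycle_apply hf hy hu hum⟩
    · exact ⟨u + 1, hum, orbitOf_splitCycle_iterate hf hy hu hum⟩

theorem coddAux_splitCycle (hf : Set.BijOn f (Set.Icc 1 (n + 1)) (Set.Icc 1 (n + 1)))
    (hy : y ∈ Set.Icc 1 (n + 1)) (hu : 0 < u) (hum : u + 1 < minimalPeriod f y)
    (heven : minimalPeriod f y % 2 = 0) :
    coddAux (splitCycle f y u) n = coddAux f n + 2 := by
  have hmem : ∀ k, f^[k] y ∈ orbitOf f n y := fun k => (mem_orbitOf_iff hf hy).2 ⟨k, rfl⟩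
  have hcard : #(orbitOf f n y) = minimalPeriod f y := by
    simpa [orbitOf_eq_image_range_minimalPeriod hf hy] using
      card_image_range_iterate (f := f) (y := y) (s := 0) (by omega)
  rw [coddAux_eq_add_of_eqOn_compl hf (bijOn_splitCycle hf hy) hy (hcard ▸ heven) ?_,
    image_orbitOf_splitCycle hf hy hu hum]
  · set B := (range u).image (f^[1 + ·] y)
    set A := (range (minimalPeriod f y - u - 1)).image (f^[u + 1 + ·] y)
    have hB : #B = u := card_image_range_iterate (by omega)
    have hA : #A = minimalPeriod f y - u - 1 := card_image_range_iterate (by omega)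
    have hyB : ({y} : Finset ℕ) ≠ B := fun h => by
      obtain ⟨k, hk, hky⟩ := mem_image.1 (h ▸ mem_singleton_self y)
      exact iterate_ne_self_of_lt_minimalPeriod (by omega) (by rw [mem_range] at hk; omega) hky
    have hyA : ({y} : Finset ℕ) ≠ A := fun h => by
      obtain ⟨k, hk, hky⟩ := mem_image.1 (h ▸ mem_singleton_self y)
      exact iterate_ne_self_of_lt_minimalPeriod (by omega) (by rw [mem_range] at hk; omega) hky
    simp only [filter_insert, filter_singleton, card_singleton, hA, hB]
    rcases Nat.even_or_odd u with ⟨w, hw⟩ | ⟨w, hw⟩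
    · rw [show u % 2 = 0 by omega, show (minimalPeriod f y - u - 1) % 2 = 1 by omega]
      simp [card_pair hyA]
    · rw [show u % 2 = 1 by omega, show (minimalPeriod f y - u - 1) % 2 = 0 by omega]
      simp [card_pair hyB]
  · intro x _ hx
    have hne : ∀ k, x ≠ f^[k] y := fun k h => hx (h ▸ hmem k)
    rw [splitCycle, comp_apply, triCyc_apply_of_ne (hne _) (show x ≠ y from hne 0) (hne u)]

theorem IsCycleOf.iterate_cgNext (hC : IsCycleOf n π m o) (k : ℕ) :
    (cgNext π)^[k] (o 1) = o (k % m + 1) := by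
  induction k with
  | zero => simp
  | succ k ih =>
    rw [iterate_succ_apply', ih, hC.2.2.2.1 _ (by omega) (Nat.mod_lt k hC.1), Nat.succ_eq_add_one,
      Nat.mod_add_mod]

theorem IsCycleOf.minimalPeriod_cgNext (hC : IsCycleOf n π m o) :
    minimalPeriod (cgNext π) (o 1) = m := by
  have hper : IsPeriodicPt (cgNext π) m (o 1) := by
    rw [IsPeriodicPt, IsFixedPt, hC.iterate_cgNext, Nat.mod_self]
  refine le_antisymm (hper.minimalPeriod_le hC.1) (not_lt.1 fun hlt => ?_)
  have hpos := hper.minimalPeriod_pos hC.1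
  have h := iterate_minimalPeriod (f := cgNext π) (x := o 1)
  rw [hC.iterate_cgNext, Nat.mod_eq_of_lt hlt] at h
  have := hC.2.2.1 _ _ (by omega) (by omega) le_rfl hC.1 h
  omega

theorem IsCycleOf.isTwoTransposition_of_ascent (hπ : IsExtPerm n π) (hC : IsCycleOf n π m o)
    (hEven : m % 2 = 0) (ht : 2 ≤ t) (htm : t + 1 ≤ m) (hab : o t < o (t + 1))
    (hbc : o (t + 1) < o 1) : IsTwoTransposition n π (o t) (o (t + 1)) (o 1) := by
  have hy : o (t + 1) = (cgNext π)^[t] (o 1) := by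
    rw [hC.iterate_cgNext, Nat.mod_eq_of_lt (by omega)]
  have hmy : minimalPeriod (cgNext π) (o (t + 1)) = m := by
    rw [hy, minimalPeriod_apply_iterate (minimalPeriod_pos_iff_mem_periodicPts.1
      (hC.minimalPeriod_cgNext ▸ hC.1)), hC.minimalPeriod_cgNext]
  have ha : o t = (cgNext π)^[m - 1] (o (t + 1)) := by
    rw [hy, ← iterate_add_apply, hC.iterate_cgNext, show m - 1 + t = t - 1 + m by omega,
      Nat.add_mod_right, Nat.mod_eq_of_lt (by omega), Nat.sub_add_cancel (by omega)]
  have hc : o 1 = (cgNext π)^[m - t] (o (t + 1)) := by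
    rw [hy, ← iterate_add_apply, Nat.sub_add_cancel (by omega), hC.iterate_cgNext, Nat.mod_self]
  have hbound := hC.2.1
  have ha1 : 1 ≤ o t := (hbound t (by omega) (by omega)).1
  have hcn : o 1 ≤ n + 1 := (hbound 1 le_rfl hC.1).2
  have hsplit := coddAux_splitCycle hπ.cgNext_bijOn (hbound (t + 1) (by omega) htm) (u := m - t)
    (by omega) (by omega) (hmy ▸ hEven)
  rw [splitCycle, hmy, ← ha, ← hc] at hsplit
  exact ⟨ha1, hab, hbc, hcn, (codd_applyTransp_eq_coddAux hπ ha1 hab hbc hcn).trans hsplit⟩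

end

/-- If the cycle graph `G(π)` of an unsigned permutation `π` of size `n`
contains an oriented cycle `C = (o_1, …, o_m)` that is an even cycle, then `C` contains a
valid oriented triple `(o_i, o_j, o_k)`, with positions `i < j < k`, such that `k = j + 1`. -/
theorem even_oriented_cycle_has_valid_triple_with_consecutive_pair
    (n : ℕ) (π : Equiv.Perm ℕ) (hπ : IsExtPerm n π)
    (m : ℕ) (o : ℕ → ℕ) (hC : IsCycleOf n π m o)
    (hOriented : OrientedCycle m o) (hEven : m % 2 = 0) :
    ∃ i j k : ℕ, 1 ≤ i ∧ i < j ∧ j < k ∧ k ≤ m ∧ k = j + 1 ∧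
      ValidOrientedTriple n π (o i) (o j) (o k) := by
  obtain ⟨t, ht1, htm, hge⟩ : ∃ t, 1 ≤ t ∧ t + 1 ≤ m ∧ o t ≤ o (t + 1) := by
    simpa [OrientedCycle] using hOriented
  have hmax : o (t + 1) < o 1 := hC.2.2.2.2 _ (by omega) htm
  have hlt : o t < o (t + 1) := hge.lt_of_ne fun h => by
    have := hC.2.2.1 _ _ ht1 (by omega) (by omega) htm h
    omega
  have ht2 : 2 ≤ t := by
    by_contra h
    obtain rfl : t = 1 := by omega
    omega
  exact ⟨1, t, t + 1, le_rfl, ht2, by omega, htm, rfl,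
    Or.inl ⟨hmax, hlt, hC.isTwoTransposition_of_ascent hπ hEven ht2 htm hlt hmax⟩⟩
end

section
/- Let π be an unsigned permutation. If an odd cycle C = (o_1, …, o_m) of the cycle graph G(π) contains a valid oriented triple (o_i, o_j, o_k), with positions i < j < k and o_k > o_j > o_i, then C contains a valid oriented triple (o_{i'}, o_{j'}, o_{k'}), with positions i' < j' < k', such that i' = 1. -/
namespace CycleGraph

open Function Set

variable {n : ℕ} {f g h : ℕ → ℕ} {x y : ℕ}

theorem exists_isPeriodicPt (hf : MapsTo f (Icc 1 (n + 1)) (Icc 1 (n + 1)))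
    (hinj : InjOn f (Icc 1 (n + 1))) (hx : x ∈ Icc 1 (n + 1)) :
    ∃ p, 0 < p ∧ p ≤ n + 1 ∧ IsPeriodicPt f p x := by
  have hcard : (Finset.Icc 1 (n + 1)).card < (Finset.range (n + 2)).card := by simp
  have hmaps : ∀ k ∈ Finset.range (n + 2), f^[k] x ∈ Finset.Icc 1 (n + 1) := fun k _ => by
    simpa using hf.iterate k hx
  obtain ⟨k, hk, l, hl, hne, heq⟩ := Finset.exists_ne_map_eq_of_card_lt_of_maps_to hcard hmaps
  simp only [Finset.mem_range] at hk hl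
  -- cancel the common `min k l` iterations using injectivity
  have key : ∀ {k l}, k < l → l < n + 2 → f^[k] x = f^[l] x →
      ∃ p, 0 < p ∧ p ≤ n + 1 ∧ IsPeriodicPt f p x := fun {k l} hkl hl heq => by
    refine ⟨l - k, by omega, by omega, hinj.iterate hf k (hf.iterate _ hx) hx ?_⟩
    rw [← iterate_add_apply, Nat.add_sub_cancel' hkl.le, heq]
  rcases Nat.lt_or_gt_of_ne hne with hkl | hlk
  · exact key hkl hl heq
  · exact key hlk hk heq.symm

theorem mem_orbitOf_iff (hf : MapsTo f (Icc 1 (n + 1)) (Icc 1 (n + 1)))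
    (hinj : InjOn f (Icc 1 (n + 1))) (hx : x ∈ Icc 1 (n + 1)) :
    y ∈ orbitOf f n x ↔ ∃ k, f^[k] x = y := by
  simp only [orbitOf, Finset.mem_inter, Finset.mem_image, Finset.mem_range, Finset.mem_Icc]
  refine ⟨fun ⟨⟨k, _, hk⟩, _⟩ => ⟨k, hk⟩, fun ⟨k, hk⟩ => ?_⟩
  obtain ⟨p, hp, hpn, hper⟩ := exists_isPeriodicPt hf hinj hx
  refine ⟨⟨k % p, by have := Nat.mod_lt k hp; omega, by rw [hper.iterate_mod_apply, hk]⟩, ?_⟩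
  exact hk ▸ hf.iterate k hx

theorem orbitOf_subset : orbitOf f n x ⊆ Finset.Icc 1 (n + 1) :=
  Finset.inter_subset_right

theorem mem_Icc_of_mem_orbitOf (hy : y ∈ orbitOf f n x) : y ∈ Icc 1 (n + 1) := by
  simpa using orbitOf_subset hy

theorem self_mem_orbitOf (hx : x ∈ Icc 1 (n + 1)) : x ∈ orbitOf f n x := by
  simp only [orbitOf, Finset.mem_inter, Finset.mem_image, Finset.mem_range, Finset.mem_Icc]
  exact ⟨⟨0, by omega, rfl⟩, hx⟩

theorem orbitOf_eq_of_mem (hf : MapsTo f (Icc 1 (n + 1)) (Icc 1 (n + 1)))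
    (hinj : InjOn f (Icc 1 (n + 1))) (hx : x ∈ Icc 1 (n + 1))
    (hy : y ∈ orbitOf f n x) : orbitOf f n y = orbitOf f n x := by
  have hy' := mem_Icc_of_mem_orbitOf hy
  obtain ⟨k, rfl⟩ := (mem_orbitOf_iff hf hinj hx).1 hy
  obtain ⟨p, hp, -, hper⟩ := exists_isPeriodicPt hf hinj hx
  -- going around the orbit `p - 1` more times brings `f^[k] x` back to `x`
  have hback : f^[(p - 1) * k] (f^[k] x) = x := by
    rw [← iterate_add_apply, ← Nat.add_one_mul, Nat.sub_one_add_one hp.ne']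
    exact (hper.mul_const k).eq
  ext z
  rw [mem_orbitOf_iff hf hinj hy', mem_orbitOf_iff hf hinj hx]
  constructor
  · rintro ⟨l, rfl⟩
    exact ⟨l + k, iterate_add_apply _ _ _ _⟩
  · rintro ⟨l, rfl⟩
    exact ⟨l + (p - 1) * k, by rw [iterate_add_apply, hback]⟩

abbrev IsOddOrbitMin (f : ℕ → ℕ) (n i : ℕ) : Prop :=
  (∀ j ∈ orbitOf f n i, i ≤ j) ∧ (orbitOf f n i).card % 2 = 1

theorem coddAux_eq_card_filter :
    coddAux f n = ((Finset.Icc 1 (n + 1)).filter (IsOddOrbitMin f n)).card :=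
  rfl

-- Unlike the orbit minima counted by `coddAux`, the odd orbits are transported by relabellings.
def oddOrbits (f : ℕ → ℕ) (n : ℕ) : Finset (Finset ℕ) :=
  ((Finset.Icc 1 (n + 1)).image (orbitOf f n)).filter (fun O => O.card % 2 = 1)

theorem coddAux_eq_card_oddOrbits (hf : MapsTo f (Icc 1 (n + 1)) (Icc 1 (n + 1)))
    (hinj : InjOn f (Icc 1 (n + 1))) : coddAux f n = (oddOrbits f n).card := by
  have hinjOn : InjOn (orbitOf f n) ((Finset.Icc 1 (n + 1)).filter (IsOddOrbitMin f n)) := by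
    intro i hi j hj hij
    simp only [Finset.coe_filter, Finset.mem_Icc] at hi hj
    exact le_antisymm (hi.2.1 j (hij ▸ self_mem_orbitOf hj.1))
      (hj.2.1 i (hij ▸ self_mem_orbitOf hi.1))
  rw [coddAux_eq_card_filter, ← Finset.card_image_of_injOn hinjOn]
  congr 1
  ext O
  simp only [oddOrbits, Finset.mem_image, Finset.mem_filter, Finset.mem_Icc]
  constructor
  · rintro ⟨i, ⟨hi, -, hodd⟩, rfl⟩
    exact ⟨⟨i, hi, rfl⟩, hodd⟩
  · rintro ⟨⟨x, hx, rfl⟩, hodd⟩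
    have hne : (orbitOf f n x).Nonempty := ⟨x, self_mem_orbitOf hx⟩
    have hmin := Finset.min'_mem _ hne
    have heq := orbitOf_eq_of_mem hf hinj hx hmin
    exact ⟨_, ⟨mem_Icc_of_mem_orbitOf hmin,
      fun j hj => Finset.min'_le _ _ (heq ▸ hj), by rwa [heq]⟩, heq⟩

theorem coddAux_conj (hg : MapsTo g (Icc 1 (n + 1)) (Icc 1 (n + 1)))
    (hginj : InjOn g (Icc 1 (n + 1))) (e : Equiv.Perm ℕ)
    (he : MapsTo e (Icc 1 (n + 1)) (Icc 1 (n + 1)))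
    (he' : MapsTo e.symm (Icc 1 (n + 1)) (Icc 1 (n + 1)))
    (hh : EqOn h (e.symm ∘ g ∘ e) (Icc 1 (n + 1))) :
    coddAux h n = coddAux g n := by
  have hmaps : MapsTo h (Icc 1 (n + 1)) (Icc 1 (n + 1)) := fun x hx =>
    hh hx ▸ he' (hg (he hx))
  have hinj : InjOn h (Icc 1 (n + 1)) := fun x hx y hy hxy => by
    rw [hh hx, hh hy] at hxy
    exact e.injective (hginj (he hx) (he hy) (e.symm.injective hxy))
  have hiter : ∀ k, ∀ x ∈ Icc 1 (n + 1), h^[k] x = e.symm (g^[k] (e x)) := by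
    intro k
    induction k with
    | zero => simp
    | succ k ih =>
      intro x hx
      rw [iterate_succ_apply', ih x hx, hh (he' (hg.iterate k (he hx))), comp_apply,
        comp_apply, Equiv.apply_symm_apply, iterate_succ_apply']
  have horbit : ∀ x ∈ Icc 1 (n + 1),
      orbitOf h n x = (orbitOf g n (e x)).map e.symm.toEmbedding := by
    intro x hx
    ext y
    rw [mem_orbitOf_iff hmaps hinj hx, Finset.mem_map_equiv, Equiv.symm_symm,
      mem_orbitOf_iff hg hginj (he hx)]
    simp only [hiter _ x hx, Equiv.symm_apply_eq]
  have hodd : oddOrbits h n =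
      (oddOrbits g n).map ⟨Finset.map e.symm.toEmbedding, Finset.map_injective _⟩ := by
    ext O
    simp only [oddOrbits, Finset.mem_map, Finset.mem_filter, Finset.mem_image, Finset.mem_Icc,
      Function.Embedding.coeFn_mk]
    constructor
    · rintro ⟨⟨x, hx, rfl⟩, hcard⟩
      rw [horbit x hx, Finset.card_map] at hcard
      exact ⟨_, ⟨⟨e x, he hx, rfl⟩, hcard⟩, (horbit x hx).symm⟩
    · rintro ⟨_, ⟨⟨y, hy, rfl⟩, hcard⟩, rfl⟩
      refine ⟨⟨e.symm y, he' hy, ?_⟩, by rwa [Finset.card_map]⟩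
      rw [horbit _ (he' hy), Equiv.apply_symm_apply]
  rw [coddAux_eq_card_oddOrbits hmaps hinj, coddAux_eq_card_oddOrbits hg hginj, hodd,
    Finset.card_map]

structure IsCycleListing (n : ℕ) (f : ℕ → ℕ) (L : ℕ) (w : ℕ → ℕ) : Prop where
  pos : 0 < L
  mapsTo : MapsTo w (Icc 1 L) (Icc 1 (n + 1))
  injOn : InjOn w (Icc 1 L)
  apply_eq : ∀ t ∈ Icc 1 L, f (w t) = w (t % L + 1)

theorem image_Icc_shift (w : ℕ → ℕ) {a b : ℕ} (hab : a ≤ b) :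
    (Finset.Icc 1 (b - a)).image (fun t => w (a + t)) = (Finset.Ioc a b).image w := by
  ext y
  simp only [Finset.mem_image, Finset.mem_Icc, Finset.mem_Ioc]
  constructor
  · rintro ⟨t, ht, rfl⟩
    exact ⟨a + t, by omega, rfl⟩
  · rintro ⟨s, hs, rfl⟩
    exact ⟨s - a, by omega, by rw [Nat.add_sub_cancel' hs.1.le]⟩

theorem rotate_index {L r s t : ℕ} (hs : s ∈ Icc 1 L) (hr : 1 ≤ r) (h : t + r = s + L) :
    (r - 1 + t) % L + 1 = s := by
  obtain ⟨hs1, hs2⟩ := hs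
  rw [show r - 1 + t = s - 1 + L by omega, Nat.add_mod_right, Nat.mod_eq_of_lt (by omega)]
  omega

theorem mod_add_one_mem_Icc {L : ℕ} (hL : 0 < L) (x : ℕ) : x % L + 1 ∈ Icc 1 L :=
  ⟨Nat.le_add_left 1 _, Nat.mod_lt x hL⟩

namespace IsCycleListing

variable {L : ℕ} {w : ℕ → ℕ}

theorem iterate_apply (hw : IsCycleListing n f L w) (k : ℕ) {s : ℕ} (hs : s ∈ Icc 1 L) :
    f^[k] (w s) = w ((s - 1 + k) % L + 1) := by
  obtain ⟨hs1, hs2⟩ := hs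
  induction k with
  | zero =>
    rw [iterate_zero_apply, Nat.add_zero, Nat.mod_eq_of_lt (by omega), Nat.sub_add_cancel hs1]
  | succ k ih =>
    rw [iterate_succ_apply', ih, hw.apply_eq _ (mod_add_one_mem_Icc hw.pos _), Nat.mod_add_mod,
      Nat.add_assoc]

theorem orbitOf_eq (hf : MapsTo f (Icc 1 (n + 1)) (Icc 1 (n + 1)))
    (hinj : InjOn f (Icc 1 (n + 1))) (hw : IsCycleListing n f L w) {s : ℕ}
    (hs : s ∈ Icc 1 L) : orbitOf f n (w s) = (Finset.Icc 1 L).image w := by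
  have ⟨hs1, hs2⟩ := hs
  ext y
  rw [mem_orbitOf_iff hf hinj (hw.mapsTo hs)]
  simp only [Finset.mem_image, Finset.mem_Icc]
  constructor
  · rintro ⟨k, rfl⟩
    exact ⟨_, mod_add_one_mem_Icc hw.pos _, (hw.iterate_apply k hs).symm⟩
  · rintro ⟨t, ht, rfl⟩
    refine ⟨L + t - s, ?_⟩
    rw [hw.iterate_apply _ hs, show s - 1 + (L + t - s) = t - 1 + L by omega, Nat.add_mod_right,
      Nat.mod_eq_of_lt (by omega), Nat.sub_add_cancel ht.1]

theorem card_filter_isOddOrbitMin (hf : MapsTo f (Icc 1 (n + 1)) (Icc 1 (n + 1)))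
    (hinj : InjOn f (Icc 1 (n + 1))) (hw : IsCycleListing n f L w) :
    (((Finset.Icc 1 L).image w).filter (IsOddOrbitMin f n)).card = L % 2 := by
  set T := (Finset.Icc 1 L).image w
  have hcard : T.card = L := by
    rw [Finset.card_image_of_injOn (by simpa using hw.injOn), Nat.card_Icc, Nat.add_sub_cancel]
  have horbit : ∀ x ∈ T, orbitOf f n x = T := by
    intro x hx
    obtain ⟨s, hs, rfl⟩ := Finset.mem_image.1 hx
    exact hw.orbitOf_eq hf hinj (by simpa using hs)
  rcases Nat.mod_two_eq_zero_or_one L with heven | hodd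
  · rw [heven, Finset.card_eq_zero, Finset.filter_eq_empty_iff]
    rintro x hx ⟨-, hx_odd⟩
    rw [horbit x hx, hcard] at hx_odd
    omega
  · have hne : T.Nonempty := ⟨w 1, Finset.mem_image_of_mem _ (Finset.mem_Icc.2 ⟨le_rfl, hw.pos⟩)⟩
    have hmin := T.min'_mem hne
    rw [hodd, Finset.card_eq_one]
    refine ⟨T.min' hne, Finset.ext fun x => ?_⟩
    simp only [Finset.mem_filter, Finset.mem_singleton]
    constructor
    · rintro ⟨hx, hx_le, -⟩
      exact le_antisymm (Finset.le_min' _ _ _ fun j hj => hx_le j (horbit x hx ▸ hj))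
        (Finset.min'_le _ _ hx)
    · rintro rfl
      exact ⟨hmin, fun j hj => Finset.min'_le _ _ (horbit _ hmin ▸ hj),
        by rw [horbit _ hmin, hcard, hodd]⟩

theorem mapsTo_compl (hf : MapsTo f (Icc 1 (n + 1)) (Icc 1 (n + 1)))
    (hinj : InjOn f (Icc 1 (n + 1))) (hw : IsCycleListing n f L w) :
    MapsTo f (Icc 1 (n + 1) \ ↑((Finset.Icc 1 L).image w))
      (Icc 1 (n + 1) \ ↑((Finset.Icc 1 L).image w)) := by
  rintro x ⟨hx, hxT⟩
  refine ⟨hf hx, fun hfx => hxT ?_⟩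
  obtain ⟨t, ht, hft⟩ := Finset.mem_image.1 hfx
  obtain ⟨t', ht', hsucc⟩ : ∃ t' ∈ Icc 1 L, t' % L + 1 = t := by
    rw [Finset.mem_Icc] at ht
    rcases eq_or_ne t 1 with rfl | h1
    · exact ⟨L, ⟨hw.pos, le_rfl⟩, by rw [Nat.mod_self]⟩
    · exact ⟨t - 1, ⟨by omega, by omega⟩, by rw [Nat.mod_eq_of_lt (by omega)]; omega⟩
  have : x = w t' := hinj hx (hw.mapsTo ht') (by rw [hw.apply_eq t' ht', hsucc, hft])
  exact this ▸ Finset.mem_image_of_mem _ (by simpa using ht')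

theorem shift (hw : IsCycleListing n f L w) {a b : ℕ} (hab : a < b) (hb : b ≤ L)
    (hinner : ∀ t, a < t → t < b → g (w t) = f (w t)) (hlast : g (w b) = w (a + 1)) :
    IsCycleListing n g (b - a) (fun t => w (a + t)) where
  pos := by omega
  mapsTo := fun t ⟨ht1, ht2⟩ => hw.mapsTo ⟨by omega, by omega⟩
  injOn := fun s ⟨hs1, hs2⟩ t ⟨ht1, ht2⟩ hst => by
    have := hw.injOn (⟨by omega, by omega⟩ : a + s ∈ Icc 1 L) ⟨by omega, by omega⟩ hst
    omega
  apply_eq t ht := by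
    obtain ⟨ht1, ht2⟩ := ht
    rcases ht2.lt_or_eq with hlt | rfl
    · rw [hinner _ (by omega) (by omega), hw.apply_eq _ ⟨by omega, by omega⟩,
        Nat.mod_eq_of_lt (by omega : a + t < L), Nat.mod_eq_of_lt hlt, Nat.add_assoc]
    · rw [Nat.add_sub_cancel' hab.le, Nat.mod_self, hlast]

theorem rotate (hw : IsCycleListing n f L w) {r : ℕ} (hr : 1 ≤ r) :
    IsCycleListing n f L (fun t => w ((r - 1 + t) % L + 1)) where
  pos := hw.pos
  mapsTo t _ := hw.mapsTo (mod_add_one_mem_Icc hw.pos _)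
  injOn s hs t ht hst := by
    obtain ⟨hs1, hs2⟩ := hs
    obtain ⟨ht1, ht2⟩ := ht
    have h : r + (s - 1) ≡ r + (t - 1) [MOD L] := by
      have := hw.injOn (mod_add_one_mem_Icc hw.pos _) (mod_add_one_mem_Icc hw.pos _) hst
      rw [Nat.ModEq, show r + (s - 1) = r - 1 + s by omega, show r + (t - 1) = r - 1 + t by omega]
      omega
    have := (Nat.ModEq.add_left_cancel' r h).eq_of_lt_of_lt (by omega) (by omega)
    omega
  apply_eq t _ := by
    rw [hw.apply_eq _ (mod_add_one_mem_Icc hw.pos _), Nat.mod_add_mod,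
      show r - 1 + (t % L + 1) = r - 1 + 1 + t % L by omega, Nat.add_mod_mod,
      show r - 1 + 1 + t = r - 1 + t + 1 by omega]

end IsCycleListing

theorem orbitOf_eq_of_eqOn {A : Set ℕ} (hA : MapsTo f A A) (hfg : EqOn g f A)
    (hx : x ∈ A) : orbitOf g n x = orbitOf f n x := by
  have hiter : ∀ k, g^[k] x = f^[k] x := by
    intro k
    induction k with
    | zero => rfl
    | succ k ih => rw [iterate_succ_apply', iterate_succ_apply', ih, hfg (hA.iterate k hx)]
  simp only [orbitOf, hiter]

theorem coddAux_eq_add {T : Finset ℕ} (hT : T ⊆ Finset.Icc 1 (n + 1)) :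
    coddAux f n = ((Finset.Icc 1 (n + 1) \ T).filter (IsOddOrbitMin f n)).card +
      (T.filter (IsOddOrbitMin f n)).card := by
  rw [coddAux_eq_card_filter, ← Finset.card_union_of_disjoint
    (Finset.disjoint_filter_filter Finset.sdiff_disjoint), ← Finset.filter_union,
    Finset.sdiff_union_of_subset hT]

theorem disjoint_image_Ioc {m : ℕ} {o : ℕ → ℕ} (ho : InjOn o (Icc 1 m))
    {a b c d : ℕ} (hbc : b ≤ c) (hd : d ≤ m) :
    Disjoint ((Finset.Ioc a b).image o) ((Finset.Ioc c d).image o) := by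
  rw [Finset.disjoint_left]
  rintro _ hx hy
  obtain ⟨s, hs, rfl⟩ := Finset.mem_image.1 hx
  obtain ⟨t, ht, hts⟩ := Finset.mem_image.1 hy
  rw [Finset.mem_Ioc] at hs ht
  have := ho ⟨by omega, by omega⟩ ⟨by omega, by omega⟩ hts
  omega

def threeCycle (x y z t : ℕ) : ℕ :=
  if t = x then y else if t = y then z else if t = z then x else t

theorem threeCycle_of_ne {x y z t : ℕ} (hx : t ≠ x) (hy : t ≠ y) (hz : t ≠ z) :
    threeCycle x y z t = t := by
  simp [threeCycle, hx, hy, hz]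

theorem threeCycle_rotate {x y z : ℕ} (hxy : x ≠ y) (hyz : y ≠ z) (hxz : x ≠ z) :
    threeCycle x y z = threeCycle y z x := by
  funext t
  unfold threeCycle
  split_ifs <;> omega

theorem threeCycle_injective {x y z : ℕ} (hxy : x ≠ y) (hyz : y ≠ z) (hxz : x ≠ z) :
    Injective (threeCycle x y z) := by
  intro s t hst
  unfold threeCycle at hst
  split_ifs at hst <;> omega

theorem threeCycle_mapsTo {x y z : ℕ} {s : Set ℕ} (hx : x ∈ s) (hy : y ∈ s) (hz : z ∈ s) :
    MapsTo (threeCycle x y z) s s := by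
  intro t ht
  unfold threeCycle
  split_ifs <;> assumption

theorem IsCycleListing.coddAux_add_mod_two_of_eqOn
    (hf : MapsTo f (Icc 1 (n + 1)) (Icc 1 (n + 1)))
    (hinj : InjOn f (Icc 1 (n + 1))) {L : ℕ} {w : ℕ → ℕ} (hw : IsCycleListing n f L w)
    (hfg : EqOn g f (Icc 1 (n + 1) \ ↑((Finset.Icc 1 L).image w))) :
    coddAux g n + L % 2 =
      coddAux f n + (((Finset.Icc 1 L).image w).filter (IsOddOrbitMin g n)).card := by
  have hsub : (Finset.Icc 1 L).image w ⊆ Finset.Icc 1 (n + 1) := fun x hx => by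
    obtain ⟨t, ht, rfl⟩ := Finset.mem_image.1 hx
    simpa using hw.mapsTo (by simpa using ht)
  have hout : (Finset.Icc 1 (n + 1) \ (Finset.Icc 1 L).image w).filter (IsOddOrbitMin g n) =
      (Finset.Icc 1 (n + 1) \ (Finset.Icc 1 L).image w).filter (IsOddOrbitMin f n) :=
    Finset.filter_congr fun x hx => by
      unfold IsOddOrbitMin
      rw [orbitOf_eq_of_eqOn (hw.mapsTo_compl hf hinj) hfg (by simpa using hx)]
  rw [coddAux_eq_add hsub, coddAux_eq_add (f := f) hsub, hout,
    ← hw.card_filter_isOddOrbitMin hf hinj]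
  omega

theorem IsCycleListing.split_comp_threeCycle {m : ℕ} {o : ℕ → ℕ}
    (ho : IsCycleListing n f m o) {p q : ℕ} (hp : 0 < p) (hpq : p < q) (hqm : q < m) :
    IsCycleListing n (f ∘ threeCycle (o p) (o m) (o q)) (p - 0) (fun t => o (0 + t)) ∧
      IsCycleListing n (f ∘ threeCycle (o p) (o m) (o q)) (q - p) (fun t => o (p + t)) ∧
      IsCycleListing n (f ∘ threeCycle (o p) (o m) (o q)) (m - q) (fun t => o (q + t)) := by
  have hpI : p ∈ Icc 1 m := ⟨hp, by omega⟩
  have hqI : q ∈ Icc 1 m := ⟨by omega, hqm.le⟩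
  have hmI : m ∈ Icc 1 m := ⟨by omega, le_rfl⟩
  have harc : ∀ {a b}, a < b → b ≤ m → (∀ t, a < t → t < b → t ≠ p ∧ t ≠ m ∧ t ≠ q) →
      f (threeCycle (o p) (o m) (o q) (o b)) = o (a + 1) →
      IsCycleListing n (f ∘ threeCycle (o p) (o m) (o q)) (b - a) (fun t => o (a + t)) := by
    intro a b hab hbm hint hlast
    refine ho.shift hab hbm (fun t hat htb => ?_) hlast
    have htI : t ∈ Icc 1 m := ⟨by omega, by omega⟩
    obtain ⟨htp, htm, htq⟩ := hint t hat htb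
    exact congrArg f (threeCycle_of_ne (ho.injOn.ne htI hpI htp) (ho.injOn.ne htI hmI htm)
      (ho.injOn.ne htI hqI htq))
  have hnext : ∀ {t}, 1 ≤ t → t < m → f (o t) = o (t + 1) := fun h1 h2 => by
    rw [ho.apply_eq _ ⟨h1, h2.le⟩, Nat.mod_eq_of_lt h2]
  refine ⟨harc hp (by omega) (fun t _ _ => ⟨by omega, by omega, by omega⟩) ?_,
    harc hpq hqm.le (fun t _ _ => ⟨by omega, by omega, by omega⟩) ?_,
    harc hqm le_rfl (fun t _ _ => ⟨by omega, by omega, by omega⟩) ?_⟩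
  · simp only [threeCycle, if_true, ho.apply_eq m hmI, Nat.mod_self]
  · simp only [threeCycle, if_neg (ho.injOn.ne hqI hpI hpq.ne'),
      if_neg (ho.injOn.ne hqI hmI hqm.ne), if_true, hnext hp (by omega)]
  · simp only [threeCycle, if_neg (ho.injOn.ne hmI hpI (by omega)), if_true,
      hnext (by omega) hqm]

theorem coddAux_comp_threeCycle_of_last
    (hf : MapsTo f (Icc 1 (n + 1)) (Icc 1 (n + 1)))
    (hinj : InjOn f (Icc 1 (n + 1))) {m : ℕ} {o : ℕ → ℕ} (ho : IsCycleListing n f m o)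
    {p q : ℕ} (hp : 0 < p) (hpq : p < q) (hqm : q < m) :
    coddAux (f ∘ threeCycle (o p) (o m) (o q)) n + m % 2 =
      coddAux f n + ((q - p) % 2 + (m - q) % 2 + p % 2) := by
  have hpI : p ∈ Icc 1 m := ⟨hp, by omega⟩
  have hqI : q ∈ Icc 1 m := ⟨by omega, hqm.le⟩
  have hmI : m ∈ Icc 1 m := ⟨by omega, le_rfl⟩
  have hcyc_inj := threeCycle_injective (ho.injOn.ne hpI hmI (by omega))
    (ho.injOn.ne hmI hqI (by omega)) (ho.injOn.ne hpI hqI (by omega))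
  have hcyc_maps := threeCycle_mapsTo (ho.mapsTo hpI) (ho.mapsTo hmI) (ho.mapsTo hqI)
  have hg := hf.comp hcyc_maps
  have hginj := hinj.comp hcyc_inj.injOn hcyc_maps
  obtain ⟨harc₁, harc₂, harc₃⟩ := ho.split_comp_threeCycle hp hpq hqm
  have hoff : EqOn (f ∘ threeCycle (o p) (o m) (o q)) f
      (Icc 1 (n + 1) \ ↑((Finset.Icc 1 m).image o)) := fun x hx => by
    have hx' : ∀ t ∈ Icc 1 m, x ≠ o t := fun t ht h =>
      hx.2 (h ▸ Finset.mem_image_of_mem o (by simpa using ht))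
    exact congrArg f (threeCycle_of_ne (hx' p hpI) (hx' m hmI) (hx' q hqI))
  have hT : (Finset.Icc 1 m).image o = (Finset.Ioc 0 p).image o ∪ (Finset.Ioc p q).image o ∪
      (Finset.Ioc q m).image o := by
    rw [← Finset.image_union, ← Finset.image_union, Finset.Ioc_union_Ioc_eq_Ioc hp.le hpq.le,
      Finset.Ioc_union_Ioc_eq_Ioc (by omega) hqm.le]
    rfl
  rw [ho.coddAux_add_mod_two_of_eqOn hf hinj hoff, hT, Finset.filter_union,
    Finset.card_union_of_disjoint (Finset.disjoint_filter_filter (Finset.disjoint_union_left.2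
      ⟨disjoint_image_Ioc ho.injOn hpq.le le_rfl, disjoint_image_Ioc ho.injOn le_rfl le_rfl⟩)),
    Finset.filter_union, Finset.card_union_of_disjoint (Finset.disjoint_filter_filter
      (disjoint_image_Ioc ho.injOn le_rfl hqm.le)),
    ← image_Icc_shift o (Nat.zero_le p), ← image_Icc_shift o hpq.le, ← image_Icc_shift o hqm.le,
    harc₁.card_filter_isOddOrbitMin hg hginj, harc₂.card_filter_isOddOrbitMin hg hginj,
    harc₃.card_filter_isOddOrbitMin hg hginj]
  omega

theorem coddAux_comp_threeCycle
    (hf : MapsTo f (Icc 1 (n + 1)) (Icc 1 (n + 1)))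
    (hinj : InjOn f (Icc 1 (n + 1))) {m : ℕ} {o : ℕ → ℕ} (ho : IsCycleListing n f m o)
    {p q r : ℕ} (hp : 1 ≤ p) (hpq : p < q) (hqr : q < r) (hrm : r ≤ m) :
    coddAux (f ∘ threeCycle (o p) (o r) (o q)) n + m % 2 =
      coddAux f n + ((q - p) % 2 + (r - q) % 2 + (m + p - r) % 2) := by
  -- rotate the listing so that position `r` comes last
  have key := coddAux_comp_threeCycle_of_last hf hinj (ho.rotate (r := r) (by omega))
    (p := p + m - r) (q := q + m - r) (by omega) (by omega) (by omega)
  simp only [rotate_index (s := p) ⟨hp, by omega⟩ (by omega) (by omega : p + m - r + r = p + m),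
    rotate_index (s := q) ⟨by omega, by omega⟩ (by omega) (by omega : q + m - r + r = q + m),
    rotate_index (s := r) ⟨by omega, hrm⟩ (by omega) (by omega : m + r = r + m)] at key
  omega

theorem rotEquiv_apply {a b c : ℕ} (hab : a ≤ b) (hbc : b ≤ c) (x : ℕ) :
    rotEquiv a b c x = rotFun a b c x := by
  rw [rotEquiv, dif_pos ⟨hab, hbc⟩]
  rfl

theorem rotEquiv_symm_apply {a b c : ℕ} (hab : a ≤ b) (hbc : b ≤ c) (x : ℕ) :
    (rotEquiv a b c).symm x = rotFun a (a + c - b) c x := by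
  rw [rotEquiv, dif_pos ⟨hab, hbc⟩]
  rfl

theorem rotFun_mapsTo {a b c : ℕ} (ha : 1 ≤ a) (hab : a ≤ b) (hbc : b ≤ c) (hc : c ≤ n + 1) :
    MapsTo (rotFun a b c) (Icc 1 (n + 1)) (Icc 1 (n + 1)) := by
  rintro x ⟨hx1, hx2⟩
  simp only [rotFun, Set.mem_Icc]
  split_ifs <;> omega

theorem threeCycle_rotFun {a b c x : ℕ} (ha : 1 ≤ a) (hab : a < b) (hbc : b < c) (hx : 1 ≤ x) :
    threeCycle a c b (rotFun a b c x) = rotFun a b c (x - 1) + 1 := by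
  unfold threeCycle rotFun
  split_ifs <;> omega

theorem cgNext_mapsTo {π : Equiv.Perm ℕ} (hπ : IsExtPerm n π) :
    MapsTo (cgNext π) (Icc 1 (n + 1)) (Icc 1 (n + 1)) := by
  obtain ⟨h0, hlast, hbig⟩ := hπ
  have hsymm : ∀ y, y ≤ n + 1 → π.symm y ≤ n + 1 := fun y hy => by
    by_contra! h
    have := hbig _ h
    rw [Equiv.apply_symm_apply] at this
    omega
  rintro x ⟨hx1, hx2⟩
  have hle : π (x - 1) ≤ n := by
    by_contra! h
    rcases (show π (x - 1) = n + 1 ∨ n + 1 < π (x - 1) by omega) with h | h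
    · have := π.injective (h.trans hlast.symm)
      omega
    · have := π.injective (hbig _ h)
      omega
  refine ⟨Nat.one_le_iff_ne_zero.2 fun h => ?_, hsymm _ (by omega)⟩
  rw [cgNext, Equiv.symm_apply_eq, h0] at h
  omega

theorem cgNext_injOn (π : Equiv.Perm ℕ) : InjOn (cgNext π) (Icc 1 (n + 1)) := by
  rintro x ⟨hx1, -⟩ y ⟨hy1, -⟩ hxy
  have := π.injective (Nat.add_right_cancel (π.symm.injective hxy))
  omega

theorem codd_applyTransp {π : Equiv.Perm ℕ} (hπ : IsExtPerm n π) {a b c : ℕ} (ha : 1 ≤ a)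
    (hab : a < b) (hbc : b < c) (hc : c ≤ n + 1) :
    codd n (applyTransp π a b c) = coddAux (cgNext π ∘ threeCycle a c b) n := by
  have hcyc : MapsTo (threeCycle a c b) (Icc 1 (n + 1)) (Icc 1 (n + 1)) :=
    threeCycle_mapsTo ⟨ha, by omega⟩ ⟨by omega, hc⟩ ⟨by omega, by omega⟩
  refine coddAux_conj ((cgNext_mapsTo hπ).comp hcyc)
    ((cgNext_injOn π).comp (threeCycle_injective (by omega) (by omega) (by omega)).injOn hcyc)
    (rotEquiv a b c) ?_ ?_ ?_
  · intro x hx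
    rw [rotEquiv_apply hab.le hbc.le]
    exact rotFun_mapsTo ha hab.le hbc.le hc hx
  · intro x hx
    rw [rotEquiv_symm_apply hab.le hbc.le]
    exact rotFun_mapsTo ha (by omega) (by omega) hc hx
  · intro x hx
    simp only [comp_apply, cgNext, applyTransp, Equiv.symm_trans_apply, Equiv.trans_apply,
      rotEquiv_apply hab.le hbc.le, rotEquiv_symm_apply hab.le hbc.le,
      threeCycle_rotFun ha hab hbc hx.1, Nat.add_sub_cancel]

theorem isCycleListing_of_isCycleOf {π : Equiv.Perm ℕ} {m : ℕ} {o : ℕ → ℕ}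
    (hC : IsCycleOf n π m o) : IsCycleListing n (cgNext π) m o where
  pos := hC.1
  mapsTo t ht := hC.2.1 t ht.1 ht.2
  injOn s hs t ht := hC.2.2.1 s t hs.1 hs.2 ht.1 ht.2
  apply_eq t ht := hC.2.2.2.1 t ht.1 ht.2

theorem isTwoTransposition_iff_odd_arcs {π : Equiv.Perm ℕ} (hπ : IsExtPerm n π) {m : ℕ} {o : ℕ → ℕ}
    (ho : IsCycleListing n (cgNext π) m o) (hm : m % 2 = 1) {p q r : ℕ} (hp : 1 ≤ p)
    (hpq : p < q) (hqr : q < r) (hrm : r ≤ m) {a b c : ℕ} (ha : 1 ≤ a) (hab : a < b)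
    (hbc : b < c) (hc : c ≤ n + 1) (hcyc : threeCycle a c b = threeCycle (o p) (o r) (o q)) :
    IsTwoTransposition n π a b c ↔ (q - p) % 2 = 1 ∧ (r - q) % 2 = 1 ∧ (m + p - r) % 2 = 1 := by
  have key := coddAux_comp_threeCycle (cgNext_mapsTo hπ) (cgNext_injOn π) ho hp hpq hqr hrm
  rw [IsTwoTransposition, codd_applyTransp hπ ha hab hbc hc, hcyc, codd]
  constructor
  · rintro ⟨-, -, -, -, h⟩
    omega
  · intro h
    exact ⟨ha, hab, hbc, hc, by omega⟩

theorem validOrientedTriple_one_of_odd_arcs {π : Equiv.Perm ℕ} (hπ : IsExtPerm n π) {m : ℕ}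
    {o : ℕ → ℕ} (hC : IsCycleOf n π m o) (hm : m % 2 = 1) {q r : ℕ} (hq : 1 < q) (hqr : q < r)
    (hrm : r ≤ m) (hlt : o q < o r) (h₁ : (q - 1) % 2 = 1) (h₂ : (r - q) % 2 = 1)
    (h₃ : (m + 1 - r) % 2 = 1) :
    ValidOrientedTriple n π (o 1) (o q) (o r) := by
  have hr1 : o r < o 1 := hC.2.2.2.2 r (by omega) hrm
  have hτ := (isTwoTransposition_iff_odd_arcs hπ (isCycleListing_of_isCycleOf hC) hm le_rfl hq
    hqr hrm (hC.2.1 q (by omega) (by omega)).1 hlt hr1 (hC.2.1 1 le_rfl (by omega)).2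
    (threeCycle_rotate (by omega) (by omega) (by omega))).2 ⟨h₁, h₂, h₃⟩
  exact Or.inl ⟨hr1, hlt, hτ⟩

end CycleGraph

open CycleGraph in
/-- If an odd cycle `C = (o_1, …, o_m)` of the cycle graph `G(π)` contains
a valid oriented triple `(o_i, o_j, o_k)`, with positions `i < j < k` and `o_k > o_j > o_i`,
then `C` contains a valid oriented triple `(o_{i'}, o_{j'}, o_{k'})`, with positions
`i' < j' < k'`, such that `i' = 1`. -/
theorem odd_cycle_valid_triple_case_two
    (n : ℕ) (π : Equiv.Perm ℕ) (hπ : IsExtPerm n π)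
    (m : ℕ) (o : ℕ → ℕ) (hC : IsCycleOf n π m o) (hOdd : m % 2 = 1)
    (i j k : ℕ) (hi : 1 ≤ i) (hij : i < j) (hjk : j < k) (hk : k ≤ m)
    (hpat : o k > o j ∧ o j > o i)
    (hvalid : ValidOrientedTriple n π (o i) (o j) (o k)) :
    ∃ i' j' k' : ℕ, 1 ≤ i' ∧ i' < j' ∧ j' < k' ∧ k' ≤ m ∧ i' = 1 ∧
      ValidOrientedTriple n π (o i') (o j') (o k') := by
  obtain ⟨hkj, hji⟩ := hpat
  have hτ : IsTwoTransposition n π (o i) (o j) (o k) := by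
    rcases hvalid with ⟨h, -⟩ | ⟨-, h, -⟩ | ⟨-, -, hτ⟩
    · omega
    · omega
    · exact hτ
  obtain ⟨hij_odd, hjk_odd, -⟩ := (isTwoTransposition_iff_odd_arcs hπ
    (isCycleListing_of_isCycleOf hC) hOdd hi hij hjk hk (hC.2.1 i hi (by omega)).1 hji hkj
    (hC.2.1 k (by omega) hk).2 rfl).1 hτ
  -- `o 1` is the largest element of the cycle, so it cannot play the role of the smallest one
  have hi2 : 2 ≤ i := by
    by_contra! h
    obtain rfl : i = 1 := by omega
    have := hC.2.2.2.2 j (by omega) (by omega)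
    omega
  rcases Nat.mod_two_eq_zero_or_one i with hi_even | hi_odd
  · exact ⟨1, i, j, le_rfl, by omega, hij, by omega, rfl, validOrientedTriple_one_of_odd_arcs
      hπ hC hOdd (by omega) hij (by omega) hji (by omega) hij_odd (by omega)⟩
  · exact ⟨1, j, k, le_rfl, by omega, hjk, hk, rfl, validOrientedTriple_one_of_odd_arcs
      hπ hC hOdd (by omega) hjk hk hkj (by omega) hjk_odd (by omega)⟩
end
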